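/- arXiv:2404.00295 — 3 statements merged into one kernel-verified Lean document; each statement's English description precedes it below -/
import Mathlib

section
/- Let p ≥ 2 and m ≥ 1 be integers, let a_1,…,a_p ∈ ℂ, and let b_{j,k} ∈ ℂ for 1 ≤ j ≤ p−1, 1 ≤ k ≤ m with no b_{j,k} a nonpositive integer. For n = (n_1,…,n_m) ∈ ℕ^m set A_n = (∏_{i=1}^p (a_i)_{n_1+⋯+n_m}) / (∏_{k=1}^m (b_{1,k})_{n_k}⋯(b_{p−1,k})_{n_k}·n_k!). Then for every x = (x_1,…,x_m) ∈ ℂ^m with |x_1|^{1/p} + ⋯ + |x_m|^{1/p} < 1, the family (A_n·x_1^{n_1}⋯x_m^{n_m})_{n ∈ ℕ^m} is absolutely summable. -/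
/-!
Put `t_k = |x_k|^{1/p}`, so that `|x^n| = (∏ t_k^{n_k})^p`. Up to factors polynomial in `n`,
`|(a)_N|` is at most `N!` and `|(b)_ν|` at least `ν!`; hence, with `N = n_1 + ⋯ + n_m`,
`|A_n| ≤ C (N! / ∏ n_k!)^p poly(n)`. The multinomial theorem bounds `(N! / ∏ n_k!) ∏ t_k^{n_k}`
by `(∑ t_k)^N`, so `|A_n x^n| ≤ C ∏_k (n_k + 1)^E q^{n_k}` with `q = (∑ t_k)^p < 1`: a product
of convergent series.
-/

open Finset
open scoped Nat

theorem pow_mul_add_le_mul_add_one_pow {a : ℝ} (ha : 0 ≤ a) (L : ℕ) :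
    a ^ L * (a + L) ≤ a * (a + 1) ^ L := by
  induction L with
  | zero => simp
  | succ L ih =>
    have key : a * (a + (L + 1)) ≤ (a + L) * (a + 1) := by nlinarith
    calc a ^ (L + 1) * (a + ↑(L + 1)) = a ^ L * (a * (a + (L + 1))) := by push_cast; ring
      _ ≤ a ^ L * ((a + L) * (a + 1)) := by gcongr
      _ = a ^ L * (a + L) * (a + 1) := by ring
      _ ≤ a * (a + 1) ^ L * (a + 1) := by gcongr
      _ = a * (a + 1) ^ (L + 1) := by ring

theorem ascPochhammer_eval_mul_eval_add {S : Type*} [CommSemiring S] (z : S) (n K : ℕ) :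
    (ascPochhammer S n).eval z * (ascPochhammer S K).eval (z + n) =
      (ascPochhammer S K).eval z * (ascPochhammer S n).eval (z + K) := by
  have h := fun n K => congrArg (Polynomial.eval z) (ascPochhammer_mul (S := S) n K)
  simp only [Polynomial.eval_mul, Polynomial.eval_comp, Polynomial.eval_add, Polynomial.eval_X,
    Polynomial.eval_natCast] at h
  rw [h, h, add_comm]

section Pochhammer

variable {R : Type*} [NormedRing R] [NormOneClass R]

theorem norm_ascPochhammer_eval_le_pow (z : R) (K : ℕ) :
    ‖(ascPochhammer R K).eval z‖ ≤ (‖z‖ + K) ^ K := by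
  induction K with
  | zero => simp
  | succ K ih =>
    rw [ascPochhammer_succ_eval, pow_succ]
    have hK : ‖(K : R)‖ ≤ K := by simpa using Nat.norm_cast_le (α := R) K
    refine (norm_mul_le _ _).trans (mul_le_mul ?_ ?_ (norm_nonneg _) (by positivity))
    · exact ih.trans (pow_le_pow_left₀ (by positivity) (by simp) K)
    · exact (norm_add_le _ _).trans (by push_cast; linarith)

theorem norm_ascPochhammer_eval_le_factorial_mul_pow {z : R} {L : ℕ} (hz : ‖z‖ ≤ L + 1)
    (N : ℕ) : ‖(ascPochhammer R N).eval z‖ ≤ N ! * ((N : ℝ) + 1) ^ L := by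
  induction N with
  | zero => simp
  | succ N ih =>
    have hN : ‖(N : R)‖ ≤ N := by simpa using Nat.norm_cast_le (α := R) N
    have hzN : ‖z + N‖ ≤ (N + 1 : ℝ) + L := (norm_add_le _ _).trans (by linarith)
    calc ‖(ascPochhammer R (N + 1)).eval z‖
        ≤ N ! * ((N : ℝ) + 1) ^ L * ((N + 1 : ℝ) + L) := by
          rw [ascPochhammer_succ_eval]
          refine (norm_mul_le _ _).trans (mul_le_mul ih hzN (norm_nonneg _) ?_)
          positivity
      _ = N ! * (((N : ℝ) + 1) ^ L * ((N + 1 : ℝ) + L)) := by ring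
      _ ≤ N ! * ((N + 1 : ℝ) * ((N + 1 : ℝ) + 1) ^ L) :=
          mul_le_mul_of_nonneg_left (pow_mul_add_le_mul_add_one_pow (by positivity) L)
            (by positivity)
      _ = (N + 1) ! * ((↑(N + 1) : ℝ) + 1) ^ L := by push_cast [Nat.factorial_succ]; ring

end Pochhammer

section RCLike

variable {𝕜 : Type*} [RCLike 𝕜]

theorem factorial_le_norm_ascPochhammer_eval {w : 𝕜} (hw : 1 ≤ RCLike.re w) (n : ℕ) :
    (n ! : ℝ) ≤ ‖(ascPochhammer 𝕜 n).eval w‖ := by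
  induction n with
  | zero => simp
  | succ n ih =>
    have hwn : (n : ℝ) + 1 ≤ ‖w + n‖ :=
      le_trans (by simp; linarith) (RCLike.re_le_norm (w + n))
    rw [ascPochhammer_succ_eval, norm_mul, Nat.factorial_succ, Nat.cast_mul, mul_comm]
    push_cast
    exact mul_le_mul ih hwn (by positivity) (norm_nonneg _)

/-- `(b)_n (b + n)_K = (b)_K (b + K)_n`, and `‖(b + K)_n‖ ≥ n!` since `re (b + K) ≥ 1`. -/
theorem exists_pos_mul_factorial_le_norm_ascPochhammer_eval {b : 𝕜} (hb : ∀ n : ℕ, b ≠ -n)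
    {K : ℕ} (hK : 1 ≤ RCLike.re b + K) :
    ∃ c > 0, ∀ n : ℕ, c * n ! ≤ ‖(ascPochhammer 𝕜 n).eval b‖ * ((n : ℝ) + 1) ^ K := by
  have hbK : (ascPochhammer 𝕜 K).eval b ≠ 0 := by
    rw [Ne, ascPochhammer_eval_eq_zero_iff]
    rintro ⟨k, -, hk⟩
    exact hb k (by rw [hk, neg_neg])
  refine ⟨‖(ascPochhammer 𝕜 K).eval b‖ / (‖b‖ + K + 1) ^ K, by positivity, fun n => ?_⟩
  have hshift : (n ! : ℝ) ≤ ‖(ascPochhammer 𝕜 n).eval (b + K)‖ :=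
    factorial_le_norm_ascPochhammer_eval (by simpa using hK) n
  have hpoly : ‖(ascPochhammer 𝕜 K).eval (b + n)‖ ≤ ((‖b‖ + K + 1) * (n + 1)) ^ K := by
    refine (norm_ascPochhammer_eval_le_pow _ K).trans (pow_le_pow_left₀ (by positivity) ?_ K)
    have := norm_add_le b (n : 𝕜)
    rw [RCLike.norm_natCast] at this
    nlinarith [norm_nonneg b, (n.cast_nonneg : (0 : ℝ) ≤ n)]
  rw [div_mul_eq_mul_div, div_le_iff₀ (by positivity)]
  calc ‖(ascPochhammer 𝕜 K).eval b‖ * n ! ≤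
        ‖(ascPochhammer 𝕜 K).eval b‖ * ‖(ascPochhammer 𝕜 n).eval (b + K)‖ := by gcongr
    _ = ‖(ascPochhammer 𝕜 n).eval b‖ * ‖(ascPochhammer 𝕜 K).eval (b + n)‖ := by
        rw [← norm_mul, ← norm_mul, ascPochhammer_eval_mul_eval_add]
    _ ≤ ‖(ascPochhammer 𝕜 n).eval b‖ * ((‖b‖ + K + 1) * (n + 1)) ^ K := by gcongr
    _ = ‖(ascPochhammer 𝕜 n).eval b‖ * ((n : ℝ) + 1) ^ K * (‖b‖ + K + 1) ^ K := by
        rw [mul_pow]; ring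

end RCLike

theorem Finset.sum_add_one_le_prod_add_one {ι : Type*} (s : Finset ι) (f : ι → ℕ) :
    ∑ i ∈ s, f i + 1 ≤ ∏ i ∈ s, (f i + 1) := by
  classical
  induction s using Finset.induction_on with
  | empty => simp
  | insert i s hi ih =>
    rw [sum_insert hi, prod_insert hi]
    have hP : 1 ≤ ∏ i ∈ s, (f i + 1) := le_trans (Nat.le_add_left 1 _) ih
    nlinarith

theorem multinomial_mul_prod_pow_le_sum_pow {σ : Type*} [Fintype σ] {t : σ → ℝ}
    (ht : ∀ k, 0 ≤ t k) (n : σ → ℕ) :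
    Nat.multinomial univ n * ∏ k, t k ^ n k ≤ (∑ k, t k) ^ ∑ k, n k := by
  classical
  rw [sum_pow_eq_sum_piAntidiag]
  refine single_le_sum (f := fun n => (Nat.multinomial univ n : ℝ) * ∏ k, t k ^ n k)
    (fun n _ => mul_nonneg (Nat.cast_nonneg _) (prod_nonneg fun k _ => pow_nonneg (ht k) _)) ?_
  simp [mem_piAntidiag]

theorem summable_pi_prod_of_nonneg {σ κ : Type*} [Fintype σ] {f : σ → κ → ℝ}
    (hf₀ : ∀ k j, 0 ≤ f k j) (hf : ∀ k, Summable (f k)) :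
    Summable fun n : σ → κ => ∏ k, f k (n k) := by
  classical
  refine summable_of_sum_le (c := ∏ k, ∑' j, f k j) (fun n => prod_nonneg fun k _ => hf₀ k _)
    fun u => ?_
  calc ∑ n ∈ u, ∏ k, f k (n k)
      ≤ ∑ n ∈ Fintype.piFinset fun k => u.image (· k), ∏ k, f k (n k) :=
        sum_le_sum_of_subset_of_nonneg (fun n hn => Fintype.mem_piFinset.2 fun k =>
          mem_image_of_mem _ hn) fun n _ _ => prod_nonneg fun k _ => hf₀ k _
    _ = ∏ k, ∑ j ∈ u.image (· k), f k j := (prod_univ_sum _ _).symm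
    _ ≤ ∏ k, ∑' j, f k j := prod_le_prod (fun k _ => sum_nonneg fun j _ => hf₀ k j)
        fun k _ => (hf k).sum_le_tsum _ fun j _ => hf₀ k j

theorem summable_add_one_pow_mul_geometric {r : ℝ} (hr₀ : 0 ≤ r) (hr₁ : r < 1) (E : ℕ) :
    Summable fun ν : ℕ => ((ν : ℝ) + 1) ^ E * r ^ ν := by
  refine (summable_descFactorial_mul_geometric_of_norm_lt_one E
    (by rwa [Real.norm_of_nonneg hr₀])).of_nonneg_of_le (fun ν => by positivity) fun ν => ?_
  gcongr
  have := Nat.pow_sub_le_descFactorial (ν + E) E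
  rw [Nat.add_right_comm, Nat.add_sub_cancel] at this
  exact_mod_cast this

section Coefficient

variable {𝕜 ι κ σ : Type*} [RCLike 𝕜] [Fintype ι] [Fintype κ] [Fintype σ]

/-- The coefficient `A_n` of `F_C^{p,m}(a, B; x)`, with `B = (b j k)`; the paper's case is
`ι = Fin p`, `κ = Fin (p - 1)`, `σ = Fin m`. -/
noncomputable def fcCoeff (a : ι → 𝕜) (b : κ → σ → 𝕜) (n : σ → ℕ) : 𝕜 :=
  (∏ i, (ascPochhammer 𝕜 (∑ k, n k)).eval (a i)) /
    ∏ k, ((∏ j, (ascPochhammer 𝕜 (n k)).eval (b j k)) * ((n k)! : 𝕜))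

theorem exists_norm_prod_ascPochhammer_eval_le (a : ι → 𝕜) :
    ∃ L : ℕ, ∀ N : ℕ, ‖∏ i, (ascPochhammer 𝕜 N).eval (a i)‖ ≤
      ((N ! : ℝ) * ((N : ℝ) + 1) ^ L) ^ Fintype.card ι := by
  obtain ⟨L, hL⟩ := Finite.exists_le fun i => ⌈‖a i‖⌉₊
  refine ⟨L, fun N => ?_⟩
  rw [norm_prod, ← card_univ, ← prod_const]
  refine prod_le_prod (fun i _ => norm_nonneg _) fun i _ =>
    norm_ascPochhammer_eval_le_factorial_mul_pow ?_ N
  have := (Nat.le_ceil ‖a i‖).trans (Nat.cast_le.2 (hL i))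
  linarith

theorem exists_pos_mul_prod_factorial_pow_le_norm_prod (b : κ → σ → 𝕜)
    (hb : ∀ j k, ∀ n : ℕ, b j k ≠ -n) :
    ∃ c > 0, ∃ K : ℕ, ∀ n : σ → ℕ,
      c * ∏ k, ((n k)! : ℝ) ^ (Fintype.card κ + 1) ≤
        ‖∏ k, ((∏ j, (ascPochhammer 𝕜 (n k)).eval (b j k)) * ((n k)! : 𝕜))‖ *
          ∏ k, ((n k : ℝ) + 1) ^ K := by
  obtain ⟨K, hK⟩ := Finite.exists_le fun jk : κ × σ => ⌈1 - RCLike.re (b jk.1 jk.2)⌉₊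
  have hbK : ∀ j k, 1 ≤ RCLike.re (b j k) + K := fun j k => by
    have := (Nat.le_ceil _).trans (Nat.cast_le.2 (hK (j, k)))
    linarith
  choose c hc₀ hc using fun j k =>
    exists_pos_mul_factorial_le_norm_ascPochhammer_eval (hb j k) (hbK j k)
  have hrow (k : σ) (ν : ℕ) : (∏ j, c j k) * (ν ! : ℝ) ^ Fintype.card κ ≤
      (∏ j, ‖(ascPochhammer 𝕜 ν).eval (b j k)‖) * ((ν : ℝ) + 1) ^ (K * Fintype.card κ) := by
    calc (∏ j, c j k) * (ν ! : ℝ) ^ Fintype.card κ = ∏ j, c j k * ν ! := by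
          rw [prod_mul_distrib, prod_const, card_univ]
      _ ≤ ∏ j, ‖(ascPochhammer 𝕜 ν).eval (b j k)‖ * ((ν : ℝ) + 1) ^ K :=
          prod_le_prod (fun j _ => by have := hc₀ j k; positivity) fun j _ => hc j k ν
      _ = _ := by rw [prod_mul_distrib, prod_const, card_univ, pow_mul]
  refine ⟨∏ k, ∏ j, c j k, prod_pos fun k _ => prod_pos fun j _ => hc₀ j k, K * Fintype.card κ,
    fun n => ?_⟩
  simp only [norm_prod, norm_mul, RCLike.norm_natCast]
  rw [← prod_mul_distrib, ← prod_mul_distrib]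
  refine prod_le_prod (fun k _ => ?_) fun k _ => ?_
  · exact mul_nonneg (prod_nonneg fun j _ => (hc₀ j k).le) (by positivity)
  · calc (∏ j, c j k) * ((n k)! : ℝ) ^ (Fintype.card κ + 1)
        = (∏ j, c j k) * ((n k)! : ℝ) ^ Fintype.card κ * (n k)! := by ring
      _ ≤ (∏ j, ‖(ascPochhammer 𝕜 (n k)).eval (b j k)‖) *
            ((n k : ℝ) + 1) ^ (K * Fintype.card κ) * (n k)! :=
          mul_le_mul_of_nonneg_right (hrow k (n k)) (by positivity)
      _ = _ := by ring

theorem exists_norm_fcCoeff_le (a : ι → 𝕜) (b : κ → σ → 𝕜)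
    (hb : ∀ j k, ∀ n : ℕ, b j k ≠ -n) (hcard : Fintype.card ι = Fintype.card κ + 1) :
    ∃ C ≥ 0, ∃ E : ℕ, ∀ n : σ → ℕ, ‖fcCoeff a b n‖ ≤
      C * (Nat.multinomial univ n : ℝ) ^ Fintype.card ι * ∏ k, ((n k : ℝ) + 1) ^ E := by
  obtain ⟨L, hnum⟩ := exists_norm_prod_ascPochhammer_eval_le a
  obtain ⟨c, hc₀, K, hden⟩ := exists_pos_mul_prod_factorial_pow_le_norm_prod b hb
  refine ⟨c⁻¹, by positivity, L * Fintype.card ι + K, fun n => ?_⟩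
  have hF : ((∑ k, n k)! : ℝ) = Nat.multinomial univ n * ∏ k, ((n k)! : ℝ) := by
    rw [← Nat.multinomial_spec, mul_comm]
    push_cast
    rfl
  have hN : ((∑ k, n k : ℕ) : ℝ) + 1 ≤ ∏ k, ((n k : ℝ) + 1) := by
    exact_mod_cast sum_add_one_le_prod_add_one univ n
  have hd := hden n
  rw [← hcard, prod_pow, prod_pow] at hd
  rw [prod_pow, pow_add, pow_mul, fcCoeff, norm_div]
  set μ : ℝ := (Nat.multinomial univ n : ℝ)
  set F : ℝ := ∏ k, ((n k)! : ℝ)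
  set Q : ℝ := ∏ k, ((n k : ℝ) + 1)
  set D := ‖∏ k, ((∏ j, (ascPochhammer 𝕜 (n k)).eval (b j k)) * ((n k)! : 𝕜))‖
  have hD : 0 < D := pos_of_mul_pos_left (hd.trans_lt' (by positivity)) (by positivity)
  rw [div_le_iff₀ hD]
  calc _ ≤ _ := hnum (∑ k, n k)
    _ ≤ (μ * F * Q ^ L) ^ Fintype.card ι := by rw [hF]; gcongr
    _ = c⁻¹ * μ ^ Fintype.card ι * (Q ^ L) ^ Fintype.card ι * (c * F ^ Fintype.card ι) := by
        field_simp; ring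
    _ ≤ c⁻¹ * μ ^ Fintype.card ι * (Q ^ L) ^ Fintype.card ι * (D * Q ^ K) := by gcongr
    _ = _ := by ring

end Coefficient

theorem FCpm_summable_general (p m : ℕ) (hp : 2 ≤ p)
    (a : Fin p → ℂ) (b : Fin (p - 1) → Fin m → ℂ)
    (hb : ∀ j k, ∀ n : ℕ, b j k ≠ -(n : ℂ))
    (A : (Fin m → ℕ) → ℂ)
    (hA : ∀ n : Fin m → ℕ,
      A n = (∏ i, (ascPochhammer ℂ (∑ k, n k)).eval (a i)) /
        (∏ k, ((∏ j, (ascPochhammer ℂ (n k)).eval (b j k)) * (Nat.factorial (n k) : ℂ))))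
    (x : Fin m → ℂ)
    (hx : ∑ k, ‖x k‖ ^ ((p : ℝ)⁻¹) < 1) :
    Summable (fun n : Fin m → ℕ => ‖A n * ∏ k, x k ^ n k‖) := by
  set t : Fin m → ℝ := fun k => ‖x k‖ ^ (p : ℝ)⁻¹
  have ht₀ : ∀ k, 0 ≤ t k := fun k => by positivity
  have htp : ∀ k, t k ^ p = ‖x k‖ := fun k =>
    Real.rpow_inv_natCast_pow (norm_nonneg _) (by omega)
  obtain ⟨C, hC₀, E, hC⟩ := exists_norm_fcCoeff_le a b hb (by simp; omega)
  set q := (∑ k, t k) ^ p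
  have hq₁ : q < 1 := pow_lt_one₀ (sum_nonneg fun k _ => ht₀ k) hx (by omega)
  refine ((summable_pi_prod_of_nonneg (fun _ _ => by positivity) fun _ =>
    summable_add_one_pow_mul_geometric (by positivity) hq₁ E).mul_left C).of_nonneg_of_le
    (fun _ => norm_nonneg _) fun n => ?_
  rw [Fintype.card_fin] at hC
  calc ‖A n * ∏ k, x k ^ n k‖ = ‖fcCoeff a b n‖ * (∏ k, t k ^ n k) ^ p := by
        simp only [hA n, norm_mul, norm_prod, norm_pow, ← htp, ← prod_pow, ← pow_mul, mul_comm p]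
        rfl
    _ ≤ C * (Nat.multinomial univ n : ℝ) ^ p * (∏ k, ((n k : ℝ) + 1) ^ E) *
          (∏ k, t k ^ n k) ^ p := by gcongr; exact hC n
    _ = C * ((Nat.multinomial univ n : ℝ) * ∏ k, t k ^ n k) ^ p * ∏ k, ((n k : ℝ) + 1) ^ E := by
        ring
    _ ≤ C * ((∑ k, t k) ^ ∑ k, n k) ^ p * ∏ k, ((n k : ℝ) + 1) ^ E := by
        gcongr
        exact multinomial_mul_prod_pow_le_sum_pow ht₀ n
    _ = C * ∏ k, (((n k : ℝ) + 1) ^ E * q ^ n k) := by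
        rw [prod_mul_distrib, prod_pow_eq_pow_sum, ← pow_mul, ← pow_mul, mul_comm p]
        ring

/-- absolute summability of the hypergeometric series `F_C^{p,m}(a,B;x)`
on the domain `|x_1|^{1/p} + ⋯ + |x_m|^{1/p} < 1`. -/
theorem FCpm_summable (p m : ℕ) (hp : 2 ≤ p) (hm : 1 ≤ m)
    (a : Fin p → ℂ) (b : Fin (p - 1) → Fin m → ℂ)
    (hb : ∀ j k, ∀ n : ℕ, b j k ≠ -(n : ℂ))
    (A : (Fin m → ℕ) → ℂ)
    (hA : ∀ n : Fin m → ℕ,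
      A n = (∏ i, (ascPochhammer ℂ (∑ k, n k)).eval (a i)) /
        (∏ k, ((∏ j, (ascPochhammer ℂ (n k)).eval (b j k)) * (Nat.factorial (n k) : ℂ))))
    (x : Fin m → ℂ)
    (hx : ∑ k, ‖x k‖ ^ ((p : ℝ)⁻¹) < 1) :
    Summable (fun n : Fin m → ℕ => ‖A n * ∏ k, x k ^ n k‖) :=
  FCpm_summable_general p m hp a b hb A hA x hx
end

section
/- Let p ≥ 2 and m ≥ 1 be integers and let ζ = exp(2π√−1/p) ∈ ℂ be the primitive p-th root of unity. Consider the polynomial R̃(z_1,…,z_m) = ∏_{(i_1,…,i_m) ∈ {0,…,p−1}^m} (1 − ζ^{i_1}z_1 − ⋯ − ζ^{i_m}z_m) in ℂ[z_1,…,z_m]. Then there exists a polynomial P ∈ ℂ[x_1,…,x_m] such that P(z_1^p,…,z_m^p) = R̃(z_1,…,z_m) as polynomials, P has total degree p^{m−1}, and P is irreducible in ℂ[x_1,…,x_m]. -/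
/-!
The factors `L_i = 1 - ∑ k, ζ ^ i_k • z_k` of `R̃` are irreducible and pairwise non-associated,
and the scalings `z_k ↦ ζ ^ a_k • z_k` permute them transitively (`L_i ↦ L_(i + a)`). So `R̃` is
squarefree and invariant under every scaling, which forces all its exponents to be divisible
by `p`: `R̃ = P(z ^ p)`, and comparing degrees gives `p * deg P = p ^ m`. If `P = a * b` with `a`,
`b` non-units, then `a(z ^ p)` and `b(z ^ p)` are non-unit divisors of `R̃`, so each is divisible
by some `L_i`; being scaling-invariant, each is then divisible by `L_0`, and `L_0 ^ 2 ∣ R̃`.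
-/

open MvPolynomial

namespace MvPolynomial

variable {σ R : Type*}

section CommSemiring

variable [CommSemiring R]

noncomputable def scaleVars (c : σ → R) : MvPolynomial σ R →ₐ[R] MvPolynomial σ R :=
  aeval fun k => C (c k) * X k

theorem scaleVars_monomial (c : σ → R) (d : σ →₀ ℕ) (a : R) :
    scaleVars c (monomial d a) = monomial d (a * d.prod fun k e => c k ^ e) := by
  rw [scaleVars, aeval_monomial, monomial_eq, C_mul, algebraMap_eq]
  simp only [mul_pow, Finsupp.prod_mul, ← map_pow, ← map_finsuppProd]
  ring

theorem coeff_scaleVars (c : σ → R) (f : MvPolynomial σ R) (d : σ →₀ ℕ) :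
    coeff d (scaleVars c f) = (d.prod fun k e => c k ^ e) * coeff d f := by
  classical
  induction f using induction_on' with
  | monomial d' a =>
    rw [scaleVars_monomial, coeff_monomial, coeff_monomial]
    split_ifs with h
    · rw [h, mul_comm]
    · rw [mul_zero]
  | add f g hf hg => rw [map_add, coeff_add, coeff_add, hf, hg, mul_add]

theorem scaleVars_expand {c : σ → R} {p : ℕ} (hc : ∀ k, c k ^ p = 1) (f : MvPolynomial σ R) :
    scaleVars c (expand p f) = expand p f := by
  rw [← AlgHom.comp_apply]
  congr 1
  ext1 k
  simp [scaleVars, mul_pow, ← C_pow, hc]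

theorem exists_expand_eq_of_dvd {p : ℕ} {f : MvPolynomial σ R}
    (h : ∀ d ∈ f.support, ∀ k, p ∣ d k) : ∃ g, expand p g = f := by
  refine ⟨∑ d ∈ f.support, monomial (d.mapRange (· / p) (Nat.zero_div p)) (coeff d f), ?_⟩
  conv_rhs => rw [f.as_sum]
  rw [map_sum]
  refine Finset.sum_congr rfl fun d hd => ?_
  rw [expand_monomial]
  congr
  ext k
  simp [Nat.mul_div_cancel' (h d hd k)]

end CommSemiring

theorem dvd_of_forall_scaleVars_pow_eq [CommRing R] [IsDomain R] {ζ : R} {p : ℕ} [NeZero p]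
    (hζ : IsPrimitiveRoot ζ p) {f : MvPolynomial σ R}
    (h : ∀ a : σ → Fin p, scaleVars (fun k => ζ ^ (a k : ℕ)) f = f)
    {d : σ →₀ ℕ} (hd : d ∈ f.support) (k : σ) : p ∣ d k := by
  classical
  have hcoeff := congrArg (coeff d) (h (Pi.single k 1))
  have hprod : (d.prod fun k' e => (ζ ^ ((Pi.single k 1 : σ → Fin p) k' : ℕ)) ^ e) = ζ ^ d k := by
    have hone : ζ ^ ((1 : Fin p) : ℕ) = ζ := by
      rw [Fin.val_one', ← pow_eq_pow_mod _ hζ.pow_eq_one, pow_one]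
    rw [Finsupp.prod, Finset.prod_eq_single k]
    · rw [Pi.single_eq_same, hone]
    · intro k' _ hk'
      rw [Pi.single_eq_of_ne hk', Fin.val_zero, pow_zero, one_pow]
    · intro hk
      rw [Finsupp.notMem_support_iff.mp hk, pow_zero]
  rw [coeff_scaleVars, hprod, mul_eq_right₀ (mem_support_iff.mp hd)] at hcoeff
  exact hζ.dvd_of_pow_eq_one _ hcoeff

theorem totalDegree_prod_of_isDomain [CommRing R] [IsDomain R] {ι : Type*} (s : Finset ι)
    {f : ι → MvPolynomial σ R} (hf : ∀ i ∈ s, f i ≠ 0) :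
    (∏ i ∈ s, f i).totalDegree = ∑ i ∈ s, (f i).totalDegree := by
  classical
  induction s using Finset.induction_on with
  | empty => simp
  | insert i s hi ih =>
    rw [Finset.prod_insert hi, Finset.sum_insert hi, totalDegree_mul_of_isDomain
      (hf i (Finset.mem_insert_self i s)) (Finset.prod_ne_zero_iff.mpr fun j hj =>
        hf j (Finset.mem_insert_of_mem hj)), ih fun j hj => hf j (Finset.mem_insert_of_mem hj)]

theorem eq_of_associated_of_coeff_zero_eq_one [CommRing R] [IsReduced R]
    {f g : MvPolynomial σ R} (h : Associated f g) (hf : coeff 0 f = 1) (hg : coeff 0 g = 1) :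
    f = g := by
  obtain ⟨u, rfl⟩ := h
  obtain ⟨r, -, hr⟩ := isUnit_iff_eq_C_of_isReduced.mp u.isUnit
  rw [hr, mul_comm, coeff_C_mul, hf, mul_one] at hg
  rw [hr, hg, C_1, mul_one]

end MvPolynomial

theorem exists_mem_dvd_of_dvd_prod_irreducible {α ι : Type*} [CommMonoidWithZero α]
    [NoZeroDivisors α] [UniqueFactorizationMonoid α] {s : Finset ι} {f : ι → α}
    (hf : ∀ i ∈ s, Irreducible (f i)) {x : α} (hx : ¬IsUnit x) (hdvd : x ∣ ∏ i ∈ s, f i) :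
    ∃ i ∈ s, f i ∣ x := by
  have : Nontrivial α := ⟨⟨x, 1, fun h => hx (h ▸ isUnit_one)⟩⟩
  have hx0 : x ≠ 0 := ne_zero_of_dvd_ne_zero
    (Finset.prod_ne_zero_iff.mpr fun i hi => (hf i hi).ne_zero) hdvd
  obtain ⟨q, hq, hqx⟩ := WfDvdMonoid.exists_irreducible_factor hx hx0
  obtain ⟨i, hi, hqi⟩ := hq.prime.exists_mem_finset_dvd (hqx.trans hdvd)
  exact ⟨i, hi, ((hq.associated_of_dvd (hf i hi) hqi).symm.dvd).trans hqx⟩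

theorem irreducible_of_squarefree_map {M N F : Type*} [CommMonoid M] [CommMonoid N]
    [FunLike F M N] [MonoidHomClass F M N] (φ : F) {x : M} (hx : ¬IsUnit x)
    (hsq : Squarefree (φ x)) {q : N} (hq : ¬IsUnit q) (h : ∀ y, ¬IsUnit y → y ∣ x → q ∣ φ y) :
    Irreducible x := by
  refine ⟨hx, fun a b hab => or_iff_not_and_not.mpr fun ⟨ha, hb⟩ => hq (hsq q ?_)⟩
  rw [hab, map_mul]
  exact mul_dvd_mul (h a ha (hab ▸ dvd_mul_right a b)) (h b hb (hab ▸ dvd_mul_left b a))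

section rootLinearForm

variable {σ K : Type*} [Fintype σ] [Field K] {p : ℕ} {ζ : K}

noncomputable def rootLinearForm (p : ℕ) (ζ : K) (i : σ → Fin p) : MvPolynomial σ K :=
  1 - ∑ k, C (ζ ^ (i k : ℕ)) * X k

theorem coeff_zero_rootLinearForm (i : σ → Fin p) : coeff 0 (rootLinearForm p ζ i) = 1 := by
  simp only [rootLinearForm, coeff_sub, coeff_sum, coeff_C_mul]
  simp

theorem coeff_single_rootLinearForm (i : σ → Fin p) (k : σ) :
    coeff (Finsupp.single k 1) (rootLinearForm p ζ i) = -ζ ^ (i k : ℕ) := by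
  classical
  simp only [rootLinearForm, coeff_sub, coeff_sum, coeff_C_mul]
  simp [coeff_X, coeff_one, Finsupp.single_left_inj one_ne_zero, eq_comm (a := (0 : σ →₀ ℕ))]

theorem totalDegree_rootLinearForm [Nonempty σ] (hζ : ζ ≠ 0) (i : σ → Fin p) :
    (rootLinearForm p ζ i).totalDegree = 1 := by
  refine le_antisymm ?_ ?_
  · refine (totalDegree_sub _ _).trans (max_le (by simp) ?_)
    refine (totalDegree_finsetSum _ _).trans (Finset.sup_le fun k _ => ?_)
    exact (totalDegree_mul _ _).trans (by rw [totalDegree_C, totalDegree_X])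
  · obtain ⟨k⟩ := ‹Nonempty σ›
    have hk : Finsupp.single k 1 ∈ (rootLinearForm p ζ i).support := by
      simp [coeff_single_rootLinearForm, hζ]
    simpa using le_totalDegree hk

theorem irreducible_rootLinearForm [Nonempty σ] (hζ : ζ ≠ 0) (i : σ → Fin p) :
    Irreducible (rootLinearForm p ζ i) :=
  irreducible_of_totalDegree_eq_one (totalDegree_rootLinearForm hζ i) fun _ hx =>
    isUnit_of_dvd_one (coeff_zero_rootLinearForm (ζ := ζ) i ▸ hx 0)

theorem rootLinearForm_injective (hζ : IsPrimitiveRoot ζ p) :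
    Function.Injective (rootLinearForm (σ := σ) p ζ) := by
  intro i j h
  funext k
  have hk := congrArg (coeff (Finsupp.single k 1)) h
  rw [coeff_single_rootLinearForm, coeff_single_rootLinearForm, neg_inj] at hk
  exact Fin.ext (hζ.pow_inj (i k).isLt (j k).isLt hk)

theorem scaleVars_rootLinearForm (hζ : ζ ^ p = 1) (a i : σ → Fin p) :
    scaleVars (fun k => ζ ^ (a k : ℕ)) (rootLinearForm p ζ i) = rootLinearForm p ζ (i + a) := by
  rw [rootLinearForm, rootLinearForm, map_sub, map_one, map_sum]
  congr 1
  refine Finset.sum_congr rfl fun k _ => ?_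
  simp only [scaleVars, map_mul, aeval_C, aeval_X, algebraMap_eq]
  rw [Pi.add_apply, Fin.val_add, ← pow_eq_pow_mod _ hζ, pow_add, C_mul]
  ring

variable [DecidableEq σ]

theorem squarefree_prod_rootLinearForm [Nonempty σ] [NeZero p] (hζ : IsPrimitiveRoot ζ p) :
    Squarefree (∏ i, rootLinearForm (σ := σ) p ζ i) := by
  have hirr := irreducible_rootLinearForm (σ := σ) (p := p) (hζ.ne_zero (NeZero.ne p))
  refine Finset.squarefree_prod_of_pairwise_isCoprime (fun i _ j _ hij => ?_)
    fun i _ => (hirr i).squarefree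
  refine (hirr i).isRelPrime_iff_not_dvd.mpr fun hdvd => hij (rootLinearForm_injective hζ ?_)
  exact eq_of_associated_of_coeff_zero_eq_one ((hirr i).associated_of_dvd (hirr j) hdvd)
    (coeff_zero_rootLinearForm i) (coeff_zero_rootLinearForm j)

theorem scaleVars_prod_rootLinearForm [NeZero p] (hζ : ζ ^ p = 1) (a : σ → Fin p) :
    scaleVars (fun k => ζ ^ (a k : ℕ)) (∏ i, rootLinearForm p ζ i) =
      ∏ i, rootLinearForm p ζ i := by
  simp_rw [map_prod, scaleVars_rootLinearForm hζ]
  exact Equiv.prod_comp (Equiv.addRight a) (rootLinearForm p ζ)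

theorem totalDegree_prod_rootLinearForm [Nonempty σ] (hζ : ζ ≠ 0) :
    (∏ i : σ → Fin p, rootLinearForm p ζ i).totalDegree = p ^ Fintype.card σ := by
  rw [totalDegree_prod_of_isDomain _ fun i _ => (irreducible_rootLinearForm hζ i).ne_zero]
  simp [totalDegree_rootLinearForm hζ]

theorem exists_expand_eq_prod_rootLinearForm [NeZero p] (hζ : IsPrimitiveRoot ζ p) :
    ∃ P : MvPolynomial σ K, expand p P = ∏ i, rootLinearForm p ζ i :=
  exists_expand_eq_of_dvd fun _ hd k =>
    dvd_of_forall_scaleVars_pow_eq hζ (scaleVars_prod_rootLinearForm hζ.pow_eq_one) hd k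

theorem irreducible_of_expand_eq_prod_rootLinearForm [Nonempty σ] [NeZero p]
    (hζ : IsPrimitiveRoot ζ p) {P : MvPolynomial σ K}
    (hP : expand p P = ∏ i, rootLinearForm p ζ i) : Irreducible P := by
  have hirr := irreducible_rootLinearForm (σ := σ) (p := p) (hζ.ne_zero (NeZero.ne p))
  have := isLocalHom_expand K σ (NeZero.ne p)
  have hP_nonunit : ¬IsUnit P := fun hu => (hirr 0).not_isUnit <|
    isUnit_of_dvd_unit (Finset.dvd_prod_of_mem _ (Finset.mem_univ 0)) (hP ▸ hu.map (expand p))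
  refine irreducible_of_squarefree_map (expand p) hP_nonunit
    (hP ▸ squarefree_prod_rootLinearForm hζ) (hirr 0).not_isUnit fun y hy hyP => ?_
  obtain ⟨i, -, hi⟩ := exists_mem_dvd_of_dvd_prod_irreducible (fun i _ => hirr i)
    (mt (isUnit_map_iff (expand p) y).mp hy) (hP ▸ map_dvd (expand p) hyP)
  have hroots : ∀ k, (ζ ^ ((-i) k : ℕ)) ^ p = 1 := fun k => by
    rw [← pow_mul, mul_comm, pow_mul, hζ.pow_eq_one, one_pow]
  -- scaling by `ζ ^ (-i)` carries `L_i` to `L_0` and fixes `expand p y`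
  have := map_dvd (scaleVars fun k => ζ ^ ((-i) k : ℕ)) hi
  rwa [scaleVars_rootLinearForm hζ.pow_eq_one, add_neg_cancel, scaleVars_expand hroots] at this

end rootLinearForm

/-- the polynomial
`R̃(z) = ∏_{(i_1,…,i_m) ∈ {0,…,p−1}^m} (1 − ζ^{i_1}z_1 − ⋯ − ζ^{i_m}z_m)`
descends to a polynomial `P` in the variables `x_k = z_k^p`; this `P` has total degree
`p^{m−1}` and is irreducible in `ℂ[x_1,…,x_m]`. -/
theorem FCpm_singular_polynomial_exists (p m : ℕ) (hp : 2 ≤ p) (hm : 1 ≤ m) (ζ : ℂ)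
    (hζ : ζ = Complex.exp (2 * Real.pi * Complex.I / p)) :
    ∃ P : MvPolynomial (Fin m) ℂ,
      MvPolynomial.bind₁ (fun k : Fin m => (MvPolynomial.X k) ^ p) P =
        ∏ i : Fin m → Fin p,
          (1 - ∑ k : Fin m, MvPolynomial.C (ζ ^ (i k : ℕ)) * MvPolynomial.X k) ∧
      P.totalDegree = p ^ (m - 1) ∧
      Irreducible P := by
  have hp0 : p ≠ 0 := by omega
  have : NeZero p := ⟨hp0⟩
  have : Nonempty (Fin m) := ⟨⟨0, hm⟩⟩
  have hζp : IsPrimitiveRoot ζ p := hζ ▸ Complex.isPrimitiveRoot_exp p hp0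
  obtain ⟨P, hP⟩ := exists_expand_eq_prod_rootLinearForm (σ := Fin m) hζp
  refine ⟨P, hP, ?_, irreducible_of_expand_eq_prod_rootLinearForm hζp hP⟩
  have hdeg := totalDegree_expand (p := p) P
  rw [hP, totalDegree_prod_rootLinearForm (hζp.ne_zero hp0), Fintype.card_fin,
    ← pow_sub_one_mul (by omega : m ≠ 0)] at hdeg
  exact (Nat.eq_of_mul_eq_mul_right (by omega) hdeg).symm
end

section
/- Let p ≥ 2 and m ≥ 1 be integers and ζ = exp(2π√−1/p). Let A be the localization of the polynomial ring ℂ[z_1,…,z_m] away from the element z_1⋯z_m·∏_{(i_1,…,i_m)∈{0,…,p−1}^m}(1 − ζ^{i_1}z_1 − ⋯ − ζ^{i_m}z_m). In the polynomial ring A[ξ_1,…,ξ_m], set M_k = ξ_k^p − ξ_m^p for 1 ≤ k ≤ m−1 and M_m = ξ_m^p − (z_1ξ_1 + ⋯ + z_mξ_m)^p (where z_j denotes the image of z_j in A). Then the sequence M_1, …, M_{m−1}, M_m is a regular sequence in A[ξ_1,…,ξ_m]. -/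
/-!
Write `L = m - 1` and `J_n = (ξ_j^p - ξ_L^p : j < n)`. For `i ∈ (ℤ/p)^m`, the substitution
`ξ_j ↦ ζ^{i_j} ξ_L` (`j < n`), `ξ_j ↦ ζ^{i_j} ξ_j` (`j ≥ n`) kills `J_n`, and `J_n` is exactly the
intersection of the kernels of these `p^m` substitutions: modulo `J_n` every polynomial reduces
to one of degree `< p` in each `ξ_j` with `j < n`, and by orthogonality of the characters of
`(ℤ/p)^m` such a polynomial is determined by its images. Since `A` is a domain, `M_n` is therefore
regular modulo `J_n` as soon as no substitution kills it. For `n < m - 1` the image of `M_n` is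
`ξ_n^p - ξ_L^p`; for the last symbol it is `(1 - w^p) ξ_L^p` with `w = ∑ ζ^{i_j} z_j`, and
`w^p = 1` would make one of the factors `1 - ∑ ζ^{i'_j} z_j` of `R` vanish in `A`, where it is a
unit. Finally all `M_k` vanish at `ξ = 0`, so the last quotient is nonzero.
-/

open Finset

theorem Nat.dvd_add_sub_one_mul_iff_modEq {p a b : ℕ} [NeZero p] :
    p ∣ a + (p - 1) * b ↔ a ≡ b [MOD p] := by
  rw [← ZMod.natCast_eq_zero_iff, ← ZMod.natCast_eq_natCast_iff, Nat.cast_add, Nat.cast_mul,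
    Nat.cast_pred (NeZero.pos p), ZMod.natCast_self, zero_sub, neg_one_mul, ← sub_eq_add_neg,
    sub_eq_zero]

section RootsOfUnity

variable {σ D : Type*} [Fintype σ] [CommRing D] [IsDomain D] {p : ℕ} {ζ : D}

theorem IsPrimitiveRoot.sum_fin_pow_pow (hζ : IsPrimitiveRoot ζ p) (c : ℕ) :
    ∑ l : Fin p, (ζ ^ c) ^ (l : ℕ) = if p ∣ c then (p : D) else 0 := by
  rw [Fin.sum_univ_eq_sum_range (fun l => (ζ ^ c) ^ l)]
  split_ifs with hc
  · simp [(hζ.pow_eq_one_iff_dvd c).2 hc]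
  · have hne : ζ ^ c ≠ 1 := fun h => hc ((hζ.pow_eq_one_iff_dvd c).1 h)
    refine eq_zero_of_ne_zero_of_mul_left_eq_zero (sub_ne_zero_of_ne hne.symm) ?_
    rw [mul_neg_geom_sum, ← pow_mul, mul_comm, pow_mul, hζ.pow_eq_one, one_pow, sub_self]

theorem IsPrimitiveRoot.sum_pow_sum_mul [DecidableEq σ] (hζ : IsPrimitiveRoot ζ p) (c : σ → ℕ) :
    ∑ i : σ → Fin p, ζ ^ (∑ j, (i j : ℕ) * c j) =
      if ∀ j, p ∣ c j then (p : D) ^ Fintype.card σ else 0 := by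
  have hprod : ∀ i : σ → Fin p, ζ ^ (∑ j, (i j : ℕ) * c j) = ∏ j, (ζ ^ c j) ^ (i j : ℕ) :=
    fun i => by simp_rw [← prod_pow_eq_pow_sum, ← pow_mul, mul_comm]
  simp_rw [hprod]
  rw [← Fintype.prod_sum fun j (l : Fin p) => (ζ ^ c j) ^ (l : ℕ)]
  simp_rw [hζ.sum_fin_pow_pow]
  simp only [prod_ite_zero, mem_univ, true_implies, prod_const, card_univ]

theorem IsPrimitiveRoot.pow_sum_pow_mul_ne_one [NeZero p] (hζ : IsPrimitiveRoot ζ p) {z : σ → D}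
    (hz : ∀ i : σ → Fin p, 1 - ∑ j, ζ ^ (i j : ℕ) * z j ≠ 0) (i : σ → Fin p) :
    (∑ j, ζ ^ (i j : ℕ) * z j) ^ p ≠ 1 := by
  intro h
  obtain ⟨l, hl, hζl⟩ := hζ.eq_pow_of_pow_eq_one h
  have hmod : ∀ n, ζ ^ (n % p) = ζ ^ n := fun n => by rw [hζ.eq_orderOf, pow_mod_orderOf]
  let i' : σ → Fin p := fun j => ⟨(i j + (p - l)) % p, Nat.mod_lt _ (NeZero.pos p)⟩
  have hi' : ∀ j, ζ ^ (i' j : ℕ) = ζ ^ (p - l) * ζ ^ (i j : ℕ) := fun j => by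
    change ζ ^ ((i j + (p - l)) % p) = _
    rw [hmod, pow_add, mul_comm]
  apply hz i'
  simp_rw [hi', mul_assoc, ← mul_sum, ← hζl, ← pow_add, Nat.sub_add_cancel hl.le,
    hζ.pow_eq_one, sub_self]

end RootsOfUnity

theorem isSMulRegular_quotient_of_forall_map_ne_zero {R S ι F : Type*} [CommRing R]
    [CommRing S] [IsDomain S] [FunLike F R S] [RingHomClass F R S] {I : Ideal R} (φ : ι → F)
    (hI : ∀ t, t ∈ I ↔ ∀ i, φ i t = 0) {c : R} (hc : ∀ i, φ i c ≠ 0) :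
    IsSMulRegular (R ⧸ (I • ⊤ : Submodule R R)) c := by
  rw [isSMulRegular_quotient_iff_mem_of_smul_mem, smul_eq_mul, Ideal.mul_top]
  intro t hct
  rw [hI] at hct ⊢
  intro i
  simpa [hc i] using hct i

theorem top_ne_ofList_smul_top_of_map_eq_zero {R S F : Type*} [CommRing R] [CommRing S]
    [Nontrivial S] [FunLike F R S] [RingHomClass F R S] (φ : F) {rs : List R}
    (h : ∀ r ∈ rs, φ r = 0) :
    (⊤ : Submodule R R) ≠ Ideal.ofList rs • ⊤ := by
  rw [smul_eq_mul, Ideal.mul_top]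
  intro htop
  have hker : Ideal.ofList rs ≤ RingHom.ker φ := Ideal.span_le.2 h
  have h1 : φ 1 = 0 := hker (htop ▸ Submodule.mem_top)
  exact one_ne_zero ((map_one φ).symm.trans h1)

theorem Ideal.ofList_take_ofFn {R : Type*} [CommSemiring R] {m : ℕ} (M : Fin m → R) (n : ℕ) :
    Ideal.ofList ((List.ofFn M).take n) = Ideal.span (M '' {j | (j : ℕ) < n}) := by
  refine congrArg Ideal.span (Set.ext fun x => ?_)
  simp only [Set.mem_ofPred_eq, List.mem_take_iff_getElem, List.length_ofFn, List.getElem_ofFn,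
    Set.mem_image]
  constructor
  · rintro ⟨j, hj, rfl⟩
    exact ⟨⟨j, by omega⟩, by simp only; omega, rfl⟩
  · rintro ⟨j, hj, rfl⟩
    exact ⟨j, by omega, rfl⟩

section Collapse

variable {σ : Type*} [DecidableEq σ] {s : Finset σ} {L : σ}

def collapse (s : Finset σ) (L j : σ) : σ := if j ∈ s then L else j

theorem collapse_apply_of_mem {j : σ} (hj : j ∈ s) : collapse s L j = L := if_pos hj

theorem collapse_apply_of_notMem {j : σ} (hj : j ∉ s) : collapse s L j = j := if_neg hj

theorem collapse_apply_self : collapse s L L = L := ite_self L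

theorem Finsupp.eq_of_mapDomain_collapse_eq {e e' : σ →₀ ℕ}
    (h : e.mapDomain (collapse s L) = e'.mapDomain (collapse s L)) (hs : ∀ j ∈ s, e j = e' j) :
    e = e' := by
  have hsplit : ∀ g : σ →₀ ℕ, g.mapDomain (collapse s L) =
      (g.filter (· ∈ s)).mapDomain (collapse s L) + g.filter (· ∉ s) := by
    intro g
    conv_lhs => rw [← g.filter_add_filter_not (· ∈ s)]
    rw [Finsupp.mapDomain_add, Finsupp.mapDomain_congr (v := g.filter (· ∉ s)) (g := id),
      Finsupp.mapDomain_id]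
    intro j hj
    exact collapse_apply_of_notMem fun hjs =>
      Finsupp.mem_support_iff.1 hj (Finsupp.filter_apply_neg _ _ (not_not.2 hjs))
  have hin : e.filter (· ∈ s) = e'.filter (· ∈ s) := by
    ext j
    by_cases hj : j ∈ s <;> simp [hj, hs]
  rw [hsplit e, hsplit e', hin, add_right_inj] at h
  calc e = e.filter (· ∈ s) + e.filter (· ∉ s) := (e.filter_add_filter_not _).symm
    _ = e'.filter (· ∈ s) + e'.filter (· ∉ s) := by rw [hin, h]
    _ = e' := e'.filter_add_filter_not _

/-- `ζ ^ (p - 1)` plays the role of `ζ⁻¹` here. -/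
theorem IsPrimitiveRoot.sum_pow_sum_mul_eq_ite_of_mapDomain_collapse_eq [Fintype σ] {D : Type*}
    [CommRing D] [IsDomain D] {p : ℕ} [NeZero p] {ζ : D} (hζ : IsPrimitiveRoot ζ p)
    {e e₀ : σ →₀ ℕ} (he : ∀ j ∈ s, e j < p) (he₀ : ∀ j ∈ s, e₀ j < p)
    (h : e.mapDomain (collapse s L) = e₀.mapDomain (collapse s L)) :
    ∑ i : σ → Fin p, ζ ^ (∑ j, (i j : ℕ) * (e j + (p - 1) * e₀ j)) =
      if e = e₀ then (p : D) ^ Fintype.card σ else 0 := by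
  rw [hζ.sum_pow_sum_mul]
  refine if_congr ⟨fun hdvd => ?_, fun he' j => ?_⟩ rfl rfl
  · refine Finsupp.eq_of_mapDomain_collapse_eq h fun j hj => ?_
    exact Nat.ModEq.eq_of_lt_of_lt (Nat.dvd_add_sub_one_mul_iff_modEq.1 (hdvd j)) (he j hj)
      (he₀ j hj)
  · exact Nat.dvd_add_sub_one_mul_iff_modEq.2 (he' ▸ rfl)

end Collapse

namespace MvPolynomial

theorem X_pow_sub_X_pow_ne_zero {σ R : Type*} [CommRing R] [Nontrivial R] {j k : σ}
    (hjk : j ≠ k) {n : ℕ} (hn : n ≠ 0) : (X j ^ n - X k ^ n : MvPolynomial σ R) ≠ 0 := by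
  rw [sub_ne_zero, X_pow_eq_monomial, X_pow_eq_monomial, Ne, monomial_eq_monomial_iff]
  simp [Finsupp.single_left_inj hn, hjk]

theorem one_sub_sum_C_mul_X_ne_zero {σ R : Type*} [CommRing R] [Nontrivial R] [Fintype σ]
    (a : σ → R) : (1 - ∑ k, C (a k) * X k : MvPolynomial σ R) ≠ 0 := fun h => by
  simpa using congrArg constantCoeff h

section PowDiffIdeal

variable {σ D : Type*} [CommRing D] {p : ℕ} {s : Finset σ} {L : σ}

noncomputable def powDiffIdeal (p : ℕ) (s : Finset σ) (L : σ) : Ideal (MvPolynomial σ D) :=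
  Ideal.span ((fun j => X j ^ p - X L ^ p) '' s)

theorem monomial_add_single_sub_mem_powDiffIdeal {j : σ} (hj : j ∈ s) (e : σ →₀ ℕ) (c : D) :
    monomial (e + Finsupp.single j p) c - monomial (e + Finsupp.single L p) c ∈
      powDiffIdeal p s L := by
  rw [← mul_one c, ← monomial_mul, ← monomial_mul, ← mul_sub, ← X_pow_eq_monomial,
    ← X_pow_eq_monomial]
  exact Ideal.mul_mem_left _ _ (Ideal.subset_span ⟨j, hj, rfl⟩)

theorem exists_reduced_sub_monomial_mem_powDiffIdeal [NeZero p] (hL : L ∉ s) (e : σ →₀ ℕ)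
    (c : D) :
    ∃ u : MvPolynomial σ D, monomial e c - u ∈ powDiffIdeal p s L ∧
      ∀ e' ∈ u.support, ∀ j ∈ s, e' j < p := by
  induction h : ∑ j ∈ s, e j using Nat.strong_induction_on generalizing e with
  | _ n ih =>
  by_cases hred : ∀ j ∈ s, e j < p
  · refine ⟨monomial e c, by rw [sub_self]; exact zero_mem _, fun e' he' => ?_⟩
    rwa [mem_singleton.1 (support_monomial_subset he')]
  push Not at hred
  obtain ⟨j, hj, hpj⟩ := hred
  set e₁ := e - Finsupp.single j p
  have he : e = e₁ + Finsupp.single j p :=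
    (tsub_add_cancel_of_le (Finsupp.single_le_iff.2 hpj)).symm
  have hsum : ∑ k ∈ s, (e₁ + Finsupp.single L p) k + p = n := by
    have hL0 : ∑ k ∈ s, Finsupp.single L p k = 0 :=
      sum_eq_zero fun k hk => Finsupp.single_eq_of_ne (ne_of_mem_of_not_mem hk hL)
    have hj0 : ∑ k ∈ s, Finsupp.single j p k = p := by
      rw [sum_eq_single_of_mem j hj fun k _ hk => Finsupp.single_eq_of_ne hk,
        Finsupp.single_eq_same]
    rw [← h, he]
    simp only [Finsupp.coe_add, Pi.add_apply, sum_add_distrib, hL0, hj0, add_zero]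
  obtain ⟨u, hu, hred⟩ := ih _ (by have := NeZero.pos p; omega) (e₁ + Finsupp.single L p) rfl
  refine ⟨u, ?_, hred⟩
  rw [he, ← sub_add_sub_cancel _ (monomial (e₁ + Finsupp.single L p) c)]
  exact add_mem (monomial_add_single_sub_mem_powDiffIdeal hj e₁ c) hu

theorem exists_reduced_sub_mem_powDiffIdeal [NeZero p] (hL : L ∉ s) (t : MvPolynomial σ D) :
    ∃ u : MvPolynomial σ D, t - u ∈ powDiffIdeal p s L ∧ ∀ e ∈ u.support, ∀ j ∈ s, e j < p := by
  classical
  induction t using MvPolynomial.induction_on' with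
  | monomial e c => exact exists_reduced_sub_monomial_mem_powDiffIdeal hL e c
  | add t₁ t₂ ih₁ ih₂ =>
    obtain ⟨u₁, hu₁, hred₁⟩ := ih₁
    obtain ⟨u₂, hu₂, hred₂⟩ := ih₂
    refine ⟨u₁ + u₂, by rw [add_sub_add_comm]; exact add_mem hu₁ hu₂, fun e he => ?_⟩
    rcases mem_union.1 (support_add he) with he | he
    exacts [hred₁ e he, hred₂ e he]

end PowDiffIdeal

section RootTwist

variable {σ D : Type*} [CommRing D] [DecidableEq σ] {p : ℕ} {ζ : D} {s : Finset σ} {L : σ}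

noncomputable def rootTwist (ζ : D) (s : Finset σ) (L : σ) (i : σ → Fin p) :
    MvPolynomial σ D →ₐ[D] MvPolynomial σ D :=
  aeval fun j => C (ζ ^ (i j : ℕ)) * X (collapse s L j)

theorem rootTwist_X_pow (hζ : ζ ^ p = 1) (i : σ → Fin p) (j : σ) :
    rootTwist ζ s L i (X j ^ p) = X (collapse s L j) ^ p := by
  rw [rootTwist, map_pow, aeval_X, mul_pow, ← C_pow, ← pow_mul, mul_comm (i j : ℕ), pow_mul, hζ,
    one_pow, C_1, one_mul]

theorem rootTwist_monomial [Fintype σ] (i : σ → Fin p) (e : σ →₀ ℕ) (c : D) :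
    rootTwist ζ s L i (monomial e c) =
      monomial (e.mapDomain (collapse s L)) (ζ ^ (∑ j, (i j : ℕ) * e j) * c) := by
  rw [rootTwist, aeval_monomial, ← rename_monomial, monomial_eq, map_mul, rename_C]
  simp only [mul_pow, ← C_pow, ← pow_mul, Finsupp.prod_mul, map_finsuppProd]
  simp only [map_pow, rename_X]
  rw [Finsupp.prod_fintype _ _ (fun _ => by simp), prod_pow_eq_pow_sum, algebraMap_eq, C_mul,
    C_pow]
  ring

theorem rootTwist_sum_C_mul_X [Fintype σ] (hs : ∀ j, j ∈ s ∨ j = L) (z : σ → D)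
    (i : σ → Fin p) :
    rootTwist ζ s L i (∑ j, C (z j) * X j) = C (∑ j, ζ ^ (i j : ℕ) * z j) * X L := by
  have hcollapse : ∀ j, collapse s L j = L := fun j => by
    rcases hs j with hj | rfl
    exacts [collapse_apply_of_mem hj, collapse_apply_self]
  simp only [map_sum, map_mul, rootTwist, aeval_C, aeval_X, hcollapse, algebraMap_eq, sum_mul]
  exact sum_congr rfl fun j _ => by ring

theorem powDiffIdeal_le_ker_rootTwist (hζ : ζ ^ p = 1) (i : σ → Fin p) :
    powDiffIdeal p s L ≤ RingHom.ker (rootTwist ζ s L i) := by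
  rw [powDiffIdeal, Ideal.span_le]
  rintro _ ⟨j, hj, rfl⟩
  rw [SetLike.mem_coe, RingHom.mem_ker, map_sub, rootTwist_X_pow hζ, rootTwist_X_pow hζ,
    collapse_apply_of_mem (mem_coe.1 hj), collapse_apply_self, sub_self]

theorem eq_zero_of_forall_rootTwist_eq_zero [Fintype σ] [IsDomain D] [NeZero p]
    (hζ : IsPrimitiveRoot ζ p) {u : MvPolynomial σ D} (hu : ∀ e ∈ u.support, ∀ j ∈ s, e j < p)
    (h : ∀ i : σ → Fin p, rootTwist ζ s L i u = 0) : u = 0 := by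
  ext e₀
  rw [coeff_zero]
  by_contra hne
  have he₀ : e₀ ∈ u.support := mem_support_iff.2 hne
  set S := u.support.filter fun e => e.mapDomain (collapse s L) = e₀.mapDomain (collapse s L)
  have hcoeff : ∀ i : σ → Fin p, ∑ e ∈ S, ζ ^ (∑ j, (i j : ℕ) * e j) * coeff e u = 0 := by
    intro i
    have hi := congrArg (coeff (e₀.mapDomain (collapse s L))) (h i)
    conv_lhs at hi => rw [u.as_sum, map_sum, coeff_sum]
    rw [sum_filter]
    simpa [rootTwist_monomial, coeff_monomial] using hi
  have hchar : ∀ e ∈ S, ∑ i : σ → Fin p, ζ ^ (∑ j, (i j : ℕ) * (e j + (p - 1) * e₀ j)) =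
      if e = e₀ then (p : D) ^ Fintype.card σ else 0 := fun e he =>
    hζ.sum_pow_sum_mul_eq_ite_of_mapDomain_collapse_eq (hu e (mem_filter.1 he).1) (hu e₀ he₀)
      (mem_filter.1 he).2
  have hexp : ∀ (i : σ → Fin p) (e : σ →₀ ℕ), ∑ j, (i j : ℕ) * (e j + (p - 1) * e₀ j) =
      ∑ j, (i j : ℕ) * e j + (p - 1) * ∑ j, (i j : ℕ) * e₀ j := fun i e => by
    rw [mul_sum, ← sum_add_distrib]
    exact sum_congr rfl fun j _ => by ring
  have hmul : (p : D) ^ Fintype.card σ * coeff e₀ u = 0 := calc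
    _ = ∑ e ∈ S, (∑ i : σ → Fin p, ζ ^ (∑ j, (i j : ℕ) * (e j + (p - 1) * e₀ j))) * coeff e u := by
      rw [sum_congr rfl fun e he => by rw [hchar e he]]
      simp [he₀, S]
    _ = ∑ i : σ → Fin p, ζ ^ ((p - 1) * ∑ j, (i j : ℕ) * e₀ j) *
          ∑ e ∈ S, ζ ^ (∑ j, (i j : ℕ) * e j) * coeff e u := by
      simp_rw [hexp, pow_add, sum_mul, mul_sum]
      rw [sum_comm]
      exact sum_congr rfl fun _ _ => sum_congr rfl fun _ _ => by ring
    _ = 0 := by simp [hcoeff]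
  exact hne ((mul_eq_zero.1 hmul).resolve_left (pow_ne_zero _ hζ.neZero'.out))

theorem mem_powDiffIdeal_iff [Fintype σ] [IsDomain D] [NeZero p] (hζ : IsPrimitiveRoot ζ p)
    (hL : L ∉ s) {t : MvPolynomial σ D} :
    t ∈ powDiffIdeal p s L ↔ ∀ i : σ → Fin p, rootTwist ζ s L i t = 0 := by
  refine ⟨fun ht i => powDiffIdeal_le_ker_rootTwist hζ.pow_eq_one i ht, fun ht => ?_⟩
  obtain ⟨u, hu, hred⟩ := exists_reduced_sub_mem_powDiffIdeal (p := p) hL t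
  have hu0 : u = 0 := eq_zero_of_forall_rootTwist_eq_zero hζ hred fun i => by
    have hi := powDiffIdeal_le_ker_rootTwist hζ.pow_eq_one i hu
    rwa [RingHom.mem_ker, map_sub, ht i, zero_sub, neg_eq_zero] at hi
  rwa [hu0, sub_zero] at hu

theorem rootTwist_X_pow_sub_X_pow_ne_zero [Nontrivial D] [NeZero p] (hζ : ζ ^ p = 1) {k : σ}
    (hk : k ∉ s) (hkL : k ≠ L) (i : σ → Fin p) :
    rootTwist ζ s L i (X k ^ p - X L ^ p) ≠ 0 := by
  rw [map_sub, rootTwist_X_pow hζ, rootTwist_X_pow hζ, collapse_apply_self,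
    collapse_apply_of_notMem hk]
  exact X_pow_sub_X_pow_ne_zero hkL (NeZero.ne p)

theorem rootTwist_X_pow_sub_sum_pow_ne_zero [Fintype σ] [IsDomain D] [NeZero p]
    (hζ : IsPrimitiveRoot ζ p) (hs : ∀ j, j ∈ s ∨ j = L) {z : σ → D}
    (hz : ∀ i : σ → Fin p, 1 - ∑ j, ζ ^ (i j : ℕ) * z j ≠ 0) (i : σ → Fin p) :
    rootTwist ζ s L i (X L ^ p - (∑ j, C (z j) * X j) ^ p) ≠ 0 := by
  rw [map_sub, rootTwist_X_pow hζ.pow_eq_one, collapse_apply_self, map_pow,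
    rootTwist_sum_C_mul_X hs, mul_pow, ← C_pow, ← one_sub_mul, ← C_1, ← C_sub]
  exact mul_ne_zero (C_ne_zero.2 (sub_ne_zero.2 (hζ.pow_sum_pow_mul_ne_one hz i).symm))
    (pow_ne_zero _ (X_ne_zero L))

end RootTwist

end MvPolynomial


open MvPolynomial

/-- over the coordinate ring `A = ℂ[z^±, 1/R(z)]` of the complement of the
pulled-back singular locus, the symbols `M_1 = ξ_1^p − ξ_m^p, …, M_{m−1} = ξ_{m−1}^p − ξ_m^p,
M_m = ξ_m^p − (z_1ξ_1 + ⋯ + z_mξ_m)^p` form a regular sequence in `A[ξ_1,…,ξ_m]`. -/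
theorem FCpm_symbols_regular_sequence (p m : ℕ) (hp : 2 ≤ p) (hm : 1 ≤ m) (ζ : ℂ)
    (hζ : ζ = Complex.exp (2 * Real.pi * Complex.I / p))
    (r : MvPolynomial (Fin m) ℂ)
    (hr : r = (∏ k : Fin m, X k) *
      ∏ i : Fin m → Fin p, (1 - ∑ k : Fin m, C (ζ ^ (i k : ℕ)) * X k))
    (M : Fin m → MvPolynomial (Fin m) (Localization.Away r))
    (hM : ∀ k : Fin m, M k =
      if (k : ℕ) < m - 1 then
        X k ^ p - X (⟨m - 1, by omega⟩ : Fin m) ^ p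
      else
        X (⟨m - 1, by omega⟩ : Fin m) ^ p -
          (∑ j : Fin m,
            C (algebraMap (MvPolynomial (Fin m) ℂ) (Localization.Away r) (X j)) * X j) ^ p) :
    RingTheory.Sequence.IsRegular (MvPolynomial (Fin m) (Localization.Away r))
      (List.ofFn M) := by
  have : NeZero p := ⟨by omega⟩
  have : IsDomain (Localization.Away r) := Localization.Away.isDomain <| hr ▸
    mul_ne_zero (prod_ne_zero_iff.2 fun k _ => X_ne_zero k)
      (prod_ne_zero_iff.2 fun i _ => one_sub_sum_C_mul_X_ne_zero _)
  set L : Fin m := ⟨m - 1, by omega⟩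
  have hζA : IsPrimitiveRoot (algebraMap ℂ (Localization.Away r) ζ) p :=
    (hζ ▸ Complex.isPrimitiveRoot_exp p (by omega)).map_of_injective (algebraMap ℂ _).injective
  refine ⟨(RingTheory.Sequence.isWeaklyRegular_iff _ _).2 fun n hn => ?_,
    top_ne_ofList_smul_top_of_map_eq_zero (aeval fun _ => (0 : Localization.Away r)) ?_⟩
  · rw [List.length_ofFn] at hn
    have hJ : Ideal.ofList ((List.ofFn M).take n) =
        powDiffIdeal p ({j | (j : ℕ) < n} : Finset (Fin m)) L := by
      rw [Ideal.ofList_take_ofFn, powDiffIdeal, coe_filter_univ]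
      refine congrArg Ideal.span (Set.image_congr fun j hj => ?_)
      rw [hM, if_pos (by simp only [Set.mem_ofPred_eq] at hj; omega)]
    rw [List.getElem_ofFn, hJ]
    refine isSMulRegular_quotient_of_forall_map_ne_zero _
      (fun t => mem_powDiffIdeal_iff hζA (by simp [L]; omega)) fun i => ?_
    rw [hM]
    split_ifs with hlt <;> dsimp only at hlt
    · exact rootTwist_X_pow_sub_X_pow_ne_zero hζA.pow_eq_one (by simp)
        (fun h => by simp [L, Fin.ext_iff] at h; omega) i
    · refine rootTwist_X_pow_sub_sum_pow_ne_zero hζA (fun j => by simp [L, Fin.ext_iff]; omega)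
        (fun i' => ?_) i
      have hdvd : (1 - ∑ k, C (ζ ^ (i' k : ℕ)) * X k) ∣ r :=
        hr ▸ (dvd_prod_of_mem _ (mem_univ i')).mul_left _
      simpa [IsScalarTower.algebraMap_apply ℂ (MvPolynomial (Fin m) ℂ) (Localization.Away r)]
        using (IsLocalization.Away.isUnit_of_dvd (S := Localization.Away r) r hdvd).ne_zero
  · intro x hx
    obtain ⟨k, rfl⟩ := List.mem_ofFn.1 hx
    rw [hM k]
    split_ifs <;> simp [zero_pow (NeZero.ne p)]
end
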